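/- Let A be a densely defined dissipative operator on a complex Hilbert space H with domain 𝔇. If 𝔇 is contained in the domain of the adjoint A* and 𝔇 is a core for A*, then the range of I − A is dense in H. -/

import Mathlib

/-- Let `A` be a densely defined dissipative operator on a complex Hilbert
space `H` with domain `𝔇`.  If `𝔇` is contained in the domain of the adjoint `A†` and `𝔇` is a
core for `A†` (the closure of the restriction of `A†` to `𝔇` equals the closure of `A†`), then
the range of `I - A` is dense in `H`. -/
theorem range_one_sub_dense_of_dissipative_core
    {H : Type*} [NormedAddCommGroup H] [InnerProductSpace ℂ H] [CompleteSpace H]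
    (A : H →ₗ.[ℂ] H)
    (hdense : Dense (A.domain : Set H))
    (hdiss : ∀ u : A.domain, (inner ℂ (A u) (u : H) : ℂ).re ≤ 0)
    (hsub : A.domain ≤ A.adjoint.domain)
    (hcore : (A.adjoint.domRestrict A.domain).closure = A.adjoint.closure) :
    DenseRange (fun u : A.domain => (u : H) - A u) := by
  -- The range as a submodule
  set T : A.domain →ₗ[ℂ] H := A.domain.subtype - A.toFun with hT
  have hfun : (fun u : A.domain => (u : H) - A u) = ⇑T := rfl
  rw [hfun]
  have key : ∀ v : H, (∀ u : A.domain, (inner ℂ v ((u : H) - A u) : ℂ) = 0) → v = 0 := by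
    intro v hv
    -- `v` belongs to the adjoint domain with `A† v = v`
    have hv' : ∀ u : A.domain, (inner ℂ v (u : H) : ℂ) = inner ℂ v (A u) := by
      intro u
      have := hv u
      rw [inner_sub_right, sub_eq_zero] at this
      exact this
    have hmem : v ∈ A.adjoint.domain :=
      LinearPMap.mem_adjoint_domain_of_exists (T := A) v ⟨v, hv'⟩
    have happ : A.adjoint ⟨v, hmem⟩ = v :=
      LinearPMap.adjoint_apply_eq hdense ⟨v, hmem⟩ hv'
    -- `(v, v)` lies in the closure of the graph of the restriction of `A†` to `𝔇`
    have h1 : (v, v) ∈ A.adjoint.graph := by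
      have := A.adjoint.mem_graph ⟨v, hmem⟩
      rwa [happ] at this
    have h2 : (v, v) ∈ (A.adjoint.domRestrict A.domain).closure.graph := by
      rw [hcore]
      exact LinearPMap.le_graph_of_le A.adjoint.le_closure h1
    have h3 : (v, v) ∈
        closure ((A.adjoint.domRestrict A.domain).graph : Set (H × H)) := by
      by_cases hc : (A.adjoint.domRestrict A.domain).IsClosable
      · rw [← hc.graph_closure_eq_closure_graph] at h2
        rw [← Submodule.topologicalClosure_coe]
        exact h2
      · rw [LinearPMap.closure_def' hc] at h2
        exact subset_closure h2
    -- The dissipativity condition passes to the closure of the graph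
    set s : Set (H × H) := {p | (inner ℂ p.2 p.1 : ℂ).re ≤ 0} with hs
    have hsclosed : IsClosed s := by
      have hcont : Continuous fun p : H × H => (inner ℂ p.2 p.1 : ℂ).re :=
        Complex.continuous_re.comp (continuous_snd.inner continuous_fst)
      exact isClosed_le hcont continuous_const
    have hgraphsub : ((A.adjoint.domRestrict A.domain).graph : Set (H × H)) ⊆ s := by
      intro p hp
      rw [SetLike.mem_coe, LinearPMap.mem_graph_iff] at hp
      obtain ⟨u, hu1, hu2⟩ := hp
      have hx𝔇 : (u : H) ∈ A.domain := u.2.1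
      set uA : A.domain := ⟨(u : H), hx𝔇⟩ with huA
      set uStar : A.adjoint.domain := ⟨(u : H), hsub hx𝔇⟩ with huStar
      have hval : (A.adjoint.domRestrict A.domain) u = A.adjoint uStar :=
        LinearPMap.domRestrict_apply rfl
      have hformal : (inner ℂ (A.adjoint uStar) ((uA : H)) : ℂ) = inner ℂ ((uStar : H)) (A uA) :=
        LinearPMap.adjoint_isFormalAdjoint hdense uStar uA
      show (inner ℂ p.2 p.1 : ℂ).re ≤ 0
      rw [← hu1, ← hu2, hval]
      have : (inner ℂ ((uStar : H)) (A uA) : ℂ) = starRingEnd ℂ (inner ℂ (A uA) ((uA : H)) : ℂ) := by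
        rw [inner_conj_symm]
      rw [show ((u : H) : H) = (uA : H) from rfl, hformal, this, Complex.conj_re]
      exact hdiss uA
    have hvv : (v, v) ∈ s := (hsclosed.closure_subset_iff.mpr hgraphsub) h3
    have hle : (inner ℂ v v : ℂ).re ≤ 0 := hvv
    exact (re_inner_self_nonpos (𝕜 := ℂ) (x := v)).mp hle
  -- Conclude density from triviality of the orthogonal complement
  have horth : (LinearMap.range T)ᗮ = ⊥ := by
    rw [Submodule.eq_bot_iff]
    intro v hv
    refine key v fun u => ?_
    have : ((u : H) - A u) ∈ LinearMap.range T := ⟨u, rfl⟩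
    exact Submodule.inner_left_of_mem_orthogonal this hv
  have : (LinearMap.range T).topologicalClosure = ⊤ :=
    Submodule.topologicalClosure_eq_top_iff.mpr horth
  have hdense' : Dense ((LinearMap.range T : Submodule ℂ H) : Set H) :=
    Submodule.dense_iff_topologicalClosure_eq_top.mpr this
  rw [LinearMap.coe_range] at hdense'
  exact hdense'
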